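/- arXiv:1705.07387 — 2 statements merged into one kernel-verified Lean document; each statement's English description precedes it below -/
import Mathlib

section
/- Let u(t) = √2·sech(t) and v(t) = −√2·sech(t)·tanh(t) be the homoclinic orbit of the system u̇ = v, v̇ = u − u³. Then for every real λ, the Melnikov integral ∫_ℝ (λ − u(t)²)·v(t)² dt converges and equals (4/3)·λ − 16/15. In particular, this integral vanishes if and only if λ = 4/5. -/
/-!
Along the homoclinic orbit `u² = 2 sech² t` and `v² = 2 sech² t · tanh² t`, and
`sech² = 1 - tanh²` is the derivative of `tanh`, which maps `ℝ` onto `(-1, 1)`. The substitution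
`s = tanh t` therefore turns the Melnikov integral into `∫_{-1}^{1} 2 (λ - 2 + 2 s²) s² ds`.
-/

open Real Filter MeasureTheory Topology

namespace Real

theorem hasDerivAt_tanh (x : ℝ) : HasDerivAt tanh (cosh x ^ 2)⁻¹ x := by
  have h := (hasDerivAt_sinh x).div (hasDerivAt_cosh x) (cosh_pos x).ne'
  rw [show cosh x * cosh x - sinh x * sinh x = 1 by linear_combination cosh_sq_sub_sinh_sq x,
    one_div] at h
  exact h.congr_of_eventuallyEq (.of_forall fun y => tanh_eq_sinh_div_cosh y)

theorem continuous_tanh : Continuous tanh :=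
  continuous_iff_continuousAt.2 fun x => (hasDerivAt_tanh x).continuousAt

theorem tanh_eq_one_sub_exp_div (x : ℝ) :
    tanh x = (1 - exp (-2 * x)) / (1 + exp (-2 * x)) := by
  have h : exp (-2 * x) = (exp x ^ 2)⁻¹ := by rw [← exp_nat_mul, ← exp_neg]; ring_nf
  rw [tanh_eq, h, exp_neg]
  field_simp

theorem tendsto_tanh_atTop : Tendsto tanh atTop (𝓝 1) := by
  have h : Tendsto (fun x => exp (-2 * x)) atTop (𝓝 0) :=
    tendsto_exp_atBot.comp (tendsto_id.const_mul_atTop_of_neg (by norm_num))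
  have : Tendsto (fun x => (1 - exp (-2 * x)) / (1 + exp (-2 * x))) atTop
      (𝓝 ((1 - 0) / (1 + 0))) :=
    (tendsto_const_nhds.sub h).div (tendsto_const_nhds.add h) (by norm_num)
  rw [funext tanh_eq_one_sub_exp_div]
  simpa using this

theorem tendsto_tanh_atBot : Tendsto tanh atBot (𝓝 (-1)) := by
  simpa [Function.comp_def] using (tendsto_tanh_atTop.comp tendsto_neg_atBot_atTop).neg

theorem inv_cosh_sq_le (x : ℝ) : (cosh x ^ 2)⁻¹ ≤ (1 + x ^ 2)⁻¹ := by
  have hx : x ^ 2 ≤ sinh x ^ 2 :=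
    sq_le_sq.2 (by rw [abs_sinh]; exact self_le_sinh_iff.2 (abs_nonneg x))
  gcongr
  linarith [cosh_sq x]

theorem inv_cosh_sq_eq_one_sub_tanh_sq (x : ℝ) : (cosh x ^ 2)⁻¹ = 1 - tanh x ^ 2 := by
  have := (cosh_pos x).ne'
  rw [tanh_eq_sinh_div_cosh]
  field_simp
  linear_combination -cosh_sq_sub_sinh_sq x

end Real

section TanhSubstitution

variable {g : ℝ → ℝ}

theorem integrable_comp_tanh_mul_inv_cosh_sq (hg : Continuous g) :
    Integrable fun t => g (tanh t) * (cosh t ^ 2)⁻¹ := by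
  obtain ⟨C, hC⟩ := (isCompact_Icc (a := -1) (b := 1)).exists_bound_of_continuousOn
    hg.continuousOn
  have hsech : Integrable fun t : ℝ => (cosh t ^ 2)⁻¹ :=
    integrable_inv_one_add_sq.mono' (by fun_prop)
      (.of_forall fun t => by
        rw [norm_inv, norm_pow, Real.norm_eq_abs, abs_of_pos (cosh_pos t)]
        exact inv_cosh_sq_le t)
  refine hsech.bdd_mul (c := C) (hg.comp continuous_tanh).aestronglyMeasurable
    (.of_forall fun t => hC _ ?_)
  exact ⟨(neg_one_lt_tanh t).le, (tanh_lt_one t).le⟩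

theorem integral_comp_tanh_mul_inv_cosh_sq (hg : Continuous g) :
    ∫ t, g (tanh t) * (cosh t ^ 2)⁻¹ = ∫ s in (-1)..1, g s := by
  set G : ℝ → ℝ := fun x => ∫ s in (0 : ℝ)..x, g s
  have hG : ∀ x, HasDerivAt G (g x) x := fun x => (hg.integral_hasStrictDerivAt 0 x).hasDerivAt
  have hGcont : Continuous G := continuous_iff_continuousAt.2 fun x => (hG x).continuousAt
  have hGtanh : ∀ t, HasDerivAt (G ∘ tanh) (g (tanh t) * (cosh t ^ 2)⁻¹) t :=
    fun t => (hG _).comp t (hasDerivAt_tanh t)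
  rw [integral_of_hasDerivAt_of_tendsto hGtanh (integrable_comp_tanh_mul_inv_cosh_sq hg)
    ((hGcont.tendsto _).comp tendsto_tanh_atBot) ((hGcont.tendsto _).comp tendsto_tanh_atTop)]
  exact intervalIntegral.integral_interval_sub_left (hg.intervalIntegrable _ _)
    (hg.intervalIntegrable _ _)

end TanhSubstitution

theorem integral_melnikov_polynomial (lam : ℝ) :
    ∫ s in (-1 : ℝ)..1, 2 * (lam - 2 * (1 - s ^ 2)) * s ^ 2 = 4 / 3 * lam - 16 / 15 := by
  have hpoly : (fun s : ℝ => 2 * (lam - 2 * (1 - s ^ 2)) * s ^ 2) =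
      fun s => (2 * lam - 4) * s ^ 2 + 4 * s ^ 4 := by
    ext; ring
  rw [hpoly, intervalIntegral.integral_add (Continuous.intervalIntegrable (by fun_prop) _ _)
    (Continuous.intervalIntegrable (by fun_prop) _ _)]
  simp only [intervalIntegral.integral_const_mul, integral_pow]
  norm_num
  ring

/-- The Melnikov integral along the homoclinic orbit `u(t) = √2 sech t`,
`v(t) = −√2 sech t tanh t` of `u̇ = v`, `v̇ = u − u³`:
for every `λ`, `∫_ℝ (λ − u²)v² dt` converges and equals `(4/3)λ − 16/15`,
vanishing iff `λ = 4/5`. -/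
theorem stmt_14 :
    let u : ℝ → ℝ := fun t => Real.sqrt 2 * (1 / Real.cosh t)
    let v : ℝ → ℝ := fun t => -(Real.sqrt 2 * (1 / Real.cosh t) * Real.tanh t)
    ∀ lam : ℝ,
      MeasureTheory.Integrable (fun t : ℝ => (lam - u t ^ 2) * v t ^ 2) ∧
      (∫ t : ℝ, (lam - u t ^ 2) * v t ^ 2) = 4 / 3 * lam - 16 / 15 ∧
      ((∫ t : ℝ, (lam - u t ^ 2) * v t ^ 2) = 0 ↔ lam = 4 / 5) := by
  intro u v lam
  set g : ℝ → ℝ := fun s => 2 * (lam - 2 * (1 - s ^ 2)) * s ^ 2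
  have hg : Continuous g := by fun_prop
  have hsubst : (fun t => (lam - u t ^ 2) * v t ^ 2) = fun t => g (tanh t) * (cosh t ^ 2)⁻¹ := by
    ext t
    simp only [u, v, g, ← inv_cosh_sq_eq_one_sub_tanh_sq]
    rw [mul_pow, neg_sq, mul_pow, mul_pow, sq_sqrt zero_le_two, one_div, inv_pow]
    ring
  have hval : ∫ t, (lam - u t ^ 2) * v t ^ 2 = 4 / 3 * lam - 16 / 15 := by
    rw [hsubst, integral_comp_tanh_mul_inv_cosh_sq hg, integral_melnikov_polynomial]
  refine ⟨hsubst ▸ integrable_comp_tanh_mul_inv_cosh_sq hg, hval, ?_⟩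
  rw [hval]
  constructor <;> intro h <;> linarith
end

section
/- Consider the rotated asymmetric system ẋ = y, ẏ = (r − p)x + (r − 1)y − (s + y)x² − x³ with s > 0. Its equilibria are the points (x*, 0) with x*·(x*² + s·x* − (r − p)) = 0, and the Jacobian matrix at such an equilibrium is [[0, 1], [r − p − 2s·x* − 3(x*)², r − 1 − (x*)²]]. (i) At the equilibrium x* = 0, this matrix equals [[0, 1], [0, 0]] (zero is an eigenvalue of algebraic multiplicity two) if and only if (p, r) = (1, 1). (ii) There exists a nonzero equilibrium x* (a root of x² + sx − (r − p) = 0) at which the matrix equals [[0, 1], [0, 0]] if and only if (p, r) = (1 + s²/2, 1 + s²/4), in which case x* = −s/2. Thus the asymmetric model has exactly two Bogdanov–Takens points, Q₁ = (1, 1) and Q₂ = (1 + s²/2, 1 + s²/4). -/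
/-!
The equilibria are read off by factoring `x` out of the right-hand side at `y = 0`. For the
Bogdanov–Takens condition, `M x* = [[0, 1], [0, 0]]` means `r − p = 2sx* + 3x*²` and
`r − 1 = x*²`. At `x* = 0` this is `p = r = 1`. At a nonzero equilibrium, subtracting the first
relation from the equilibrium equation `x*² + sx* = r − p` gives `x*(s + 2x*) = 0`, so
`x* = −s/2`, and then `r − p` and `r − 1` are determined; `s > 0` makes `−s/2` nonzero.
-/

namespace RotatedAsymmetric

def field (p r s : ℝ) (w : Fin 2 → ℝ) : Fin 2 → ℝ :=
  ![w 1, (r - p) * w 0 + (r - 1) * w 1 - (s + w 1) * w 0 ^ 2 - w 0 ^ 3]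

def jacobian (p r s x y : ℝ) : Matrix (Fin 2) (Fin 2) ℝ :=
  !![0, 1; r - p - 2 * (s + y) * x - 3 * x ^ 2, r - 1 - x ^ 2]

theorem hasFDerivAt_field (p r s : ℝ) (w : Fin 2 → ℝ) :
    HasFDerivAt (field p r s)
      (LinearMap.toContinuousLinearMap (Matrix.mulVecLin (jacobian p r s (w 0) (w 1)))) w := by
  have hx : HasFDerivAt (fun v : Fin 2 → ℝ => v 0) (ContinuousLinearMap.proj (R := ℝ) 0) w :=
    hasFDerivAt_apply 0 w
  have hy : HasFDerivAt (fun v : Fin 2 → ℝ => v 1) (ContinuousLinearMap.proj (R := ℝ) 1) w :=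
    hasFDerivAt_apply 1 w
  refine hasFDerivAt_pi'' fun i => ?_
  fin_cases i
  · refine hy.congr_fderiv ?_
    ext v
    simp [jacobian, dotProduct, Fin.sum_univ_two]
  · have h := (((hx.const_mul (r - p)).add (hy.const_mul (r - 1))).sub
      (((hasFDerivAt_const s w).add hy).mul (hx.pow 2))).sub (hx.pow 3)
    refine h.congr_fderiv ?_
    ext v
    simp only [Fin.isValue, Pi.add_apply, Nat.add_one_sub_one, pow_one, nsmul_eq_mul,
      Nat.cast_ofNat, zero_add, sub_apply, add_apply, smul_apply, ContinuousLinearMap.proj_apply,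
      smul_eq_mul, Fin.mk_one, jacobian, ContinuousLinearMap.comp_apply,
      LinearMap.coe_toContinuousLinearMap', Matrix.mulVecBilin_apply, Matrix.cons_mulVec,
      dotProduct, Fin.sum_univ_two, Matrix.cons_val_zero, zero_mul, Matrix.cons_val_one,
      Matrix.cons_val_fin_one, one_mul, Matrix.empty_mulVec]
    ring

theorem eq_neg_half_of_det_jacobian_eq_zero {r p s x : ℝ} (hx : x ≠ 0)
    (heq : x ^ 2 + s * x - (r - p) = 0) (hdet : r - p - 2 * s * x - 3 * x ^ 2 = 0) :
    x = -s / 2 := by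
  have h : x * (s + 2 * x) = 0 := by linear_combination -heq - hdet
  rcases mul_eq_zero.1 h with h | h
  · exact absurd h hx
  · linarith

end RotatedAsymmetric

/-- Bogdanov–Takens points of the rotated asymmetric model `ẋ = y`,
`ẏ = (r − p)x + (r − 1)y − (s + y)x² − x³` (`s > 0`): equilibria are the `(x*, 0)` with
`x*(x*² + sx* − (r − p)) = 0`, the Jacobian there is
`[[0, 1], [r − p − 2sx* − 3x*², r − 1 − x*²]]`; it equals `[[0, 1], [0, 0]]` at `x* = 0`
iff `(p, r) = (1, 1)`, and at some nonzero equilibrium iff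
`(p, r) = (1 + s²/2, 1 + s²/4)`, in which case `x* = −s/2`. -/
theorem stmt_18 (p r s : ℝ) (hs : 0 < s) :
    let M : ℝ → Matrix (Fin 2) (Fin 2) ℝ :=
      fun xs => !![(0 : ℝ), 1; r - p - 2 * s * xs - 3 * xs ^ 2, r - 1 - xs ^ 2]
    (∀ x y : ℝ,
      (y = 0 ∧ (r - p) * x + (r - 1) * y - (s + y) * x ^ 2 - x ^ 3 = 0) ↔
        (y = 0 ∧ x * (x ^ 2 + s * x - (r - p)) = 0)) ∧
    (∀ xs : ℝ, xs * (xs ^ 2 + s * xs - (r - p)) = 0 →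
      HasFDerivAt
        (fun w : Fin 2 → ℝ =>
          ![w 1, (r - p) * w 0 + (r - 1) * w 1 - (s + w 1) * w 0 ^ 2 - w 0 ^ 3])
        (LinearMap.toContinuousLinearMap (Matrix.mulVecLin (M xs))) ![xs, 0]) ∧
    (M 0 = !![(0 : ℝ), 1; 0, 0] ↔ (p = 1 ∧ r = 1)) ∧
    ((∃ xs : ℝ, xs ≠ 0 ∧ xs ^ 2 + s * xs - (r - p) = 0 ∧ M xs = !![(0 : ℝ), 1; 0, 0]) ↔
      (p = 1 + s ^ 2 / 2 ∧ r = 1 + s ^ 2 / 4)) ∧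
    (∀ xs : ℝ, xs ≠ 0 → xs ^ 2 + s * xs - (r - p) = 0 →
      M xs = !![(0 : ℝ), 1; 0, 0] → xs = -s / 2) := by
  intro M
  have hM (xs : ℝ) : M xs = !![(0 : ℝ), 1; 0, 0] ↔
      r - p - 2 * s * xs - 3 * xs ^ 2 = 0 ∧ r - 1 - xs ^ 2 = 0 := by
    simp [M]
  have root (xs : ℝ) (hx : xs ≠ 0) (heq : xs ^ 2 + s * xs - (r - p) = 0)
      (hm : M xs = !![(0 : ℝ), 1; 0, 0]) : xs = -s / 2 :=
    RotatedAsymmetric.eq_neg_half_of_det_jacobian_eq_zero hx heq ((hM xs).1 hm).1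
  refine ⟨?_, fun xs _ => ?_, ?_, ⟨?_, ?_⟩, root⟩
  · intro x y
    refine and_congr_right fun hy => ?_
    subst hy
    constructor <;> intro h <;> linear_combination -h
  · rw [show M xs = RotatedAsymmetric.jacobian p r s xs 0 by simp [M, RotatedAsymmetric.jacobian]]
    exact RotatedAsymmetric.hasFDerivAt_field p r s ![xs, 0]
  · rw [hM 0]
    constructor
    · rintro ⟨h₁, h₂⟩
      constructor <;> linarith
    · rintro ⟨rfl, rfl⟩
      norm_num
  · rintro ⟨xs, hx, heq, hm⟩
    obtain rfl := root xs hx heq hm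
    obtain ⟨h₁, h₂⟩ := (hM _).1 hm
    constructor <;> linarith
  · rintro ⟨rfl, rfl⟩
    exact ⟨-s / 2, (by linarith : -s / 2 < 0).ne, by ring, (hM _).2 ⟨by ring, by ring⟩⟩
end
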